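/- Let d ≥ 4. The function m is differentiable on (0,∞) and for all x > 0 one has |x · m′(x)| ≤ 10^4. -/

import Mathlib

noncomputable section
open MeasureTheory Real Filter Metric
open scoped ENNReal NNReal FourierTransform SchwartzMap

/-- The Bessel function of the first kind
`J_ν(t) = (t^ν/(2^ν Γ(ν+1/2) √π)) ∫_{−1}^{1} e^{its} (1−s²)^{ν−1/2} ds`. -/
def besselJ (ν : ℝ) (t : ℝ) : ℂ :=
  ((t ^ ν / (2 ^ ν * Real.Gamma (ν + 1/2) * Real.sqrt π) : ℝ) : ℂ) *
    ∫ s in (-1 : ℝ)..1, Complex.exp (Complex.I * t * s) * (((1 - s ^ 2) ^ (ν - 1/2) : ℝ) : ℂ)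

/-- The multiplier function
`m(x) = (2^{d/2} Γ((d+1)/2)/√π) ∫_{2πx}^{∞} r^{−d/2} J_{d/2}(r) dr`. -/
def mMul (d : ℕ) (x : ℝ) : ℂ :=
  ((2 ^ ((d : ℝ) / 2) * Real.Gamma (((d : ℝ) + 1) / 2) / Real.sqrt π : ℝ) : ℂ) *
    ∫ r in Set.Ioi (2 * π * x), ((r ^ (-(d : ℝ) / 2) : ℝ) : ℂ) * besselJ ((d : ℝ) / 2) r

/-!
Differentiating the tail integral gives `m'(x) = -2π C (2πx)^{-ν} J_ν(2πx)` with `ν = d/2` and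
`C = 2^ν Γ(ν+1/2)/√π`. Integrating by parts once in the Poisson integral of `J_ν`, whose weight
`(1-s²)^{ν-1/2}` vanishes at `±1` and increases then decreases with total variation `2`, gives
`|J_ν(t)| ≤ 2 t^{ν-1} / (2^ν Γ(ν+1/2) √π)`. The constants then cancel to `|x m'(x)| ≤ 2/π`.
-/

open Set Topology

section TailIntegral

variable {E : Type*} [NormedAddCommGroup E] {f : ℝ → E} {a b : ℝ}

theorem integrableOn_Ioi_iff_of_continuousOn (hf : ContinuousOn f (Ioi b)) {y z : ℝ}
    (hy : b < y) (hz : b < z) :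
    IntegrableOn f (Ioi y) ↔ IntegrableOn f (Ioi z) := by
  wlog hyz : y ≤ z generalizing y z
  · exact (this hz hy (le_of_not_ge hyz)).symm
  refine ⟨fun h ↦ h.mono_set (Ioi_subset_Ioi hyz), fun h ↦ ?_⟩
  rw [← Ioc_union_Ioi_eq_Ioi hyz]
  refine IntegrableOn.union ?_ h
  exact ((hf.mono fun r hr ↦ hy.trans_le hr.1).integrableOn_Icc).mono_set Ioc_subset_Icc_self

variable [NormedSpace ℝ E]

theorem integral_Ioi_eventuallyEq_zero (hf : ContinuousOn f (Ioi b)) (hba : b < a)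
    (hint : ¬ IntegrableOn f (Ioi a)) :
    (fun y ↦ ∫ x in Ioi y, f x) =ᶠ[𝓝 a] 0 := by
  filter_upwards [Ioi_mem_nhds hba] with y hy
  exact integral_undef fun h ↦ hint ((integrableOn_Ioi_iff_of_continuousOn hf hy hba).1 h)

variable [CompleteSpace E]

theorem hasDerivAt_integral_Ioi (hf : ContinuousOn f (Ioi b)) (hba : b < a)
    (hint : IntegrableOn f (Ioi a)) :
    HasDerivAt (fun y ↦ ∫ x in Ioi y, f x) (-f a) a := by
  set c := (b + a) / 2
  have hbc : b < c := by simp only [c]; linarith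
  have hca : c < a := by simp only [c]; linarith
  have hc : IntegrableOn f (Ioi c) := (integrableOn_Ioi_iff_of_continuousOn hf hbc hba).2 hint
  have hprim : HasDerivAt (fun y ↦ ∫ x in c..y, f x) (f a) a :=
    intervalIntegral.integral_hasDerivAt_right
      ((hf.mono fun r hr ↦ hbc.trans_le (uIcc_of_le hca.le ▸ hr).1).intervalIntegrable)
      (hf.stronglyMeasurableAtFilter isOpen_Ioi a hba) (hf.continuousAt (Ioi_mem_nhds hba))
  refine (hprim.const_sub (∫ x in Ioi c, f x)).congr_of_eventuallyEq ?_
  filter_upwards [Ioi_mem_nhds hca] with y hy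
  rw [← intervalIntegral.integral_Ioi_sub_Ioi hc (le_of_lt hy), sub_sub_cancel]

/-- Without integrability the tail integral is the junk value `0` near `a`, so the bound holds in
either case. -/
theorem exists_hasDerivAt_integral_Ioi_norm_le (hf : ContinuousOn f (Ioi b)) (hba : b < a) :
    ∃ c, HasDerivAt (fun y ↦ ∫ x in Ioi y, f x) c a ∧ ‖c‖ ≤ ‖f a‖ := by
  by_cases hint : IntegrableOn f (Ioi a)
  · exact ⟨_, hasDerivAt_integral_Ioi hf hba hint, (norm_neg _).le⟩
  · refine ⟨0, ?_, by simp⟩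
    exact (hasDerivAt_const a (0 : E)).congr_of_eventuallyEq
      (integral_Ioi_eventuallyEq_zero hf hba hint)

end TailIntegral

theorem integral_abs_deriv_eq_of_deriv_nonneg_of_nonpos {f f' : ℝ → ℝ} {a b c : ℝ}
    (hac : a ≤ c) (hcb : c ≤ b) (hf : ∀ x ∈ Icc a b, HasDerivAt f (f' x) x)
    (hf' : ContinuousOn f' (Icc a b)) (hpos : ∀ x ∈ Icc a c, 0 ≤ f' x)
    (hneg : ∀ x ∈ Icc c b, f' x ≤ 0) :
    ∫ x in a..b, |f' x| = 2 * f c - f a - f b := by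
  have hac' : Icc a c ⊆ Icc a b := Icc_subset_Icc_right hcb
  have hcb' : Icc c b ⊆ Icc a b := Icc_subset_Icc_left hac
  have hint : IntervalIntegrable (fun x ↦ |f' x|) volume a b :=
    (hf'.abs).intervalIntegrable_of_Icc (hac.trans hcb)
  have hleft : ∫ x in a..c, |f' x| = f c - f a := by
    rw [intervalIntegral.integral_congr fun x hx ↦ abs_of_nonneg (hpos x (uIcc_of_le hac ▸ hx))]
    refine intervalIntegral.integral_eq_sub_of_hasDerivAt
      (fun x hx ↦ hf x (hac' (uIcc_of_le hac ▸ hx))) ((hf'.mono hac').intervalIntegrable_of_Icc hac)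
  have hright : ∫ x in c..b, |f' x| = f c - f b := by
    rw [intervalIntegral.integral_congr fun x hx ↦ abs_of_nonpos (hneg x (uIcc_of_le hcb ▸ hx)),
      intervalIntegral.integral_neg, intervalIntegral.integral_eq_sub_of_hasDerivAt
      (fun x hx ↦ hf x (hcb' (uIcc_of_le hcb ▸ hx))) ((hf'.mono hcb').intervalIntegrable_of_Icc hcb)]
    ring
  rw [← intervalIntegral.integral_add_adjacent_intervals (hint.mono_set ?_) (hint.mono_set ?_),
    hleft, hright]
  · ring
  · rw [uIcc_of_le hac, uIcc_of_le (hac.trans hcb)]; exact hac'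
  · rw [uIcc_of_le hcb, uIcc_of_le (hac.trans hcb)]; exact hcb'

theorem norm_integral_exp_mul_I_le {g g' : ℝ → ℂ} {a b t : ℝ} (hab : a ≤ b) (ht : t ≠ 0)
    (hg : ∀ s ∈ uIcc a b, HasDerivAt g (g' s) s) (hg' : IntervalIntegrable g' volume a b)
    (ha : g a = 0) (hb : g b = 0) :
    ‖∫ s in a..b, Complex.exp (Complex.I * t * s) * g s‖ ≤ (∫ s in a..b, ‖g' s‖) / |t| := by
  set c : ℂ := Complex.I * t
  have hc : c ≠ 0 := mul_ne_zero Complex.I_ne_zero (Complex.ofReal_ne_zero.2 ht)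
  have hv : ∀ s : ℝ, HasDerivAt (fun s : ℝ ↦ Complex.exp (c * s) / c) (Complex.exp (c * s)) s := by
    intro s
    have := ((Complex.ofRealCLM.hasDerivAt (x := s)).const_mul c).cexp.div_const c
    simpa [hc] using this
  have hparts := intervalIntegral.integral_mul_deriv_eq_deriv_mul hg (fun s _ ↦ hv s) hg'
    (Continuous.intervalIntegrable (by fun_prop) a b)
  simp only [ha, hb, zero_mul, sub_zero, zero_sub] at hparts
  simp_rw [mul_comm (Complex.exp _)]
  rw [hparts, norm_neg, ← intervalIntegral.integral_div]
  refine (intervalIntegral.norm_integral_le_integral_norm hab).trans_eq ?_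
  congr 1 with s
  simp [c, Complex.norm_exp, div_eq_mul_inv]

def besselWeight (ν s : ℝ) : ℝ := (1 - s ^ 2) ^ (ν - 1/2)

def besselWeightDeriv (ν s : ℝ) : ℝ := -(2 * ν - 1) * s * (1 - s ^ 2) ^ (ν - 3/2)

section BesselWeight

variable {ν : ℝ}

theorem continuous_besselWeight (hν : 1/2 ≤ ν) : Continuous (besselWeight ν) :=
  (continuous_const.sub (continuous_pow 2)).rpow_const fun _ ↦ Or.inr (by linarith)

theorem hasDerivAt_besselWeight (hν : 3/2 ≤ ν) (s : ℝ) :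
    HasDerivAt (besselWeight ν) (besselWeightDeriv ν s) s := by
  refine (((hasDerivAt_pow 2 s).const_sub 1).rpow_const (p := ν - 1/2)
    (Or.inr (by linarith))).congr_deriv ?_
  rw [besselWeightDeriv, show ν - 1/2 - 1 = ν - 3/2 by ring]
  push_cast
  ring

theorem continuous_besselWeightDeriv (hν : 3/2 ≤ ν) : Continuous (besselWeightDeriv ν) :=
  continuous_const.mul continuous_id |>.mul <|
    (continuous_const.sub (continuous_pow 2)).rpow_const fun _ ↦ Or.inr (by linarith)

theorem besselWeight_zero : besselWeight ν 0 = 1 := by simp [besselWeight]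

theorem besselWeight_of_sq_eq_one (hν : 1/2 < ν) {s : ℝ} (hs : s ^ 2 = 1) :
    besselWeight ν s = 0 := by
  rw [besselWeight, hs, sub_self, zero_rpow (by linarith)]

theorem integral_abs_besselWeightDeriv (hν : 3/2 ≤ ν) :
    ∫ s in (-1 : ℝ)..1, |besselWeightDeriv ν s| = 2 := by
  have hw : ∀ s ∈ Icc (-1 : ℝ) 1, 0 ≤ (1 - s ^ 2) ^ (ν - 3/2) := fun s hs ↦
    rpow_nonneg (by nlinarith [hs.1, hs.2]) _
  rw [integral_abs_deriv_eq_of_deriv_nonneg_of_nonpos (by norm_num) zero_le_one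
    (fun s _ ↦ hasDerivAt_besselWeight hν s) (continuous_besselWeightDeriv hν).continuousOn
    (fun s hs ↦ ?_) (fun s hs ↦ ?_), besselWeight_zero,
    besselWeight_of_sq_eq_one (by linarith) (by norm_num),
    besselWeight_of_sq_eq_one (by linarith) (by norm_num)]
  · norm_num
  · exact mul_nonneg (mul_nonneg_of_nonpos_of_nonpos (by linarith) hs.2)
      (hw s ⟨hs.1, hs.2.trans zero_le_one⟩)
  · exact mul_nonpos_of_nonpos_of_nonneg (mul_nonpos_of_nonpos_of_nonneg (by linarith) hs.1)
      (hw s ⟨by linarith [hs.1], hs.2⟩)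

theorem norm_integral_exp_mul_besselWeight_le (hν : 3/2 ≤ ν) {t : ℝ} (ht : 0 < t) :
    ‖∫ s in (-1 : ℝ)..1, Complex.exp (Complex.I * t * s) * (besselWeight ν s : ℂ)‖ ≤ 2 / t := by
  have hend : ∀ s : ℝ, s ^ 2 = 1 → (besselWeight ν s : ℂ) = 0 := fun s hs ↦ by
    rw [besselWeight_of_sq_eq_one (by linarith) hs, Complex.ofReal_zero]
  have := norm_integral_exp_mul_I_le (a := -1) (b := 1) (by norm_num) ht.ne'
    (fun s _ ↦ (hasDerivAt_besselWeight hν s).ofReal_comp)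
    ((Complex.continuous_ofReal.comp (continuous_besselWeightDeriv hν)).intervalIntegrable _ _)
    (hend _ (by norm_num)) (hend _ (by norm_num))
  simpa only [Complex.norm_real, norm_eq_abs, integral_abs_besselWeightDeriv hν, abs_of_pos ht]
    using this

end BesselWeight

theorem continuous_besselJ {ν : ℝ} (hν : 1/2 ≤ ν) : Continuous (besselJ ν) := by
  refine Continuous.mul ?_ (intervalIntegral.continuous_parametric_intervalIntegral_of_continuous'
    ?_ _ _)
  · exact Complex.continuous_ofReal.comp
      ((continuous_id.rpow_const fun _ ↦ Or.inr (by linarith)).div_const _)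
  · exact (by fun_prop : Continuous fun p : ℝ × ℝ ↦ Complex.exp (Complex.I * p.1 * p.2)).mul
      (Complex.continuous_ofReal.comp ((continuous_besselWeight hν).comp continuous_snd))

theorem norm_rpow_neg_mul_besselJ_le {ν t : ℝ} (hν : 3/2 ≤ ν) (ht : 0 < t) :
    ‖((t ^ (-ν) : ℝ) : ℂ) * besselJ ν t‖ ≤ 2 / (2 ^ ν * Gamma (ν + 1/2) * √π * t) := by
  have hD : 0 < 2 ^ ν * Gamma (ν + 1/2) * √π := by
    have := Gamma_pos_of_pos (by linarith : 0 < ν + 1/2)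
    positivity
  have hcoef : t ^ (-ν) * (t ^ ν / (2 ^ ν * Gamma (ν + 1/2) * √π)) =
      (2 ^ ν * Gamma (ν + 1/2) * √π)⁻¹ := by
    rw [rpow_neg ht.le]
    field_simp
  rw [besselJ, ← mul_assoc, ← Complex.ofReal_mul, hcoef, norm_mul, Complex.norm_real,
    norm_of_nonneg (inv_nonneg.2 hD.le)]
  calc (2 ^ ν * Gamma (ν + 1/2) * √π)⁻¹ * ‖∫ s in (-1 : ℝ)..1,
        Complex.exp (Complex.I * t * s) * (besselWeight ν s : ℂ)‖
      ≤ (2 ^ ν * Gamma (ν + 1/2) * √π)⁻¹ * (2 / t) := by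
        gcongr
        exact norm_integral_exp_mul_besselWeight_le hν ht
    _ = 2 / (2 ^ ν * Gamma (ν + 1/2) * √π * t) := by
        field_simp

theorem continuousOn_rpow_neg_mul_besselJ {ν : ℝ} (hν : 1/2 ≤ ν) :
    ContinuousOn (fun r ↦ ((r ^ (-ν) : ℝ) : ℂ) * besselJ ν r) (Ioi 0) := fun _ hr ↦
  ((Complex.continuous_ofReal.continuousAt.comp
    (continuousAt_rpow_const _ _ (Or.inl (ne_of_gt hr)))).mul
    (continuous_besselJ hν).continuousAt).continuousWithinAt

theorem exists_hasDerivAt_mMul_norm_le {d : ℕ} (hd : 3 ≤ d) {x : ℝ} (hx : 0 < x) :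
    ∃ c, HasDerivAt (mMul d) c x ∧ ‖c‖ ≤ 2 / (π * x) := by
  set ν : ℝ := (d : ℝ) / 2 with hν_def
  have hν : 3/2 ≤ ν := by
    have : (3 : ℝ) ≤ d := by exact_mod_cast hd
    rw [hν_def]
    linarith
  set C : ℝ := 2 ^ ν * Gamma (ν + 1/2) / √π
  have hmMul : mMul d =
      fun y ↦ (C : ℂ) * ∫ r in Ioi (2 * π * y), ((r ^ (-ν) : ℝ) : ℂ) * besselJ ν r := by
    ext y
    rw [mMul, show ((d : ℝ) + 1) / 2 = ν + 1/2 by ring, neg_div]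
  have ht : 0 < 2 * π * x := by positivity
  obtain ⟨c, hc, hcf⟩ :=
    exists_hasDerivAt_integral_Ioi_norm_le
      (continuousOn_rpow_neg_mul_besselJ (ν := ν) (by linarith)) ht
  refine ⟨(C : ℂ) * ((2 * π) • c), ?_, ?_⟩
  · rw [hmMul]
    exact (hc.scomp x (by simpa using (hasDerivAt_id x).const_mul (2 * π))).const_mul _
  have hΓ : 0 < Gamma (ν + 1/2) := Gamma_pos_of_pos (by linarith)
  calc ‖(C : ℂ) * ((2 * π) • c)‖ = C * (2 * π) * ‖c‖ := by
        rw [norm_mul, norm_smul, Complex.norm_real, norm_of_nonneg (by positivity : 0 ≤ C),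
          norm_of_nonneg (by positivity : 0 ≤ 2 * π)]
        ring
    _ ≤ C * (2 * π) * (2 / (2 ^ ν * Gamma (ν + 1/2) * √π * (2 * π * x))) := by
        gcongr
        exact hcf.trans (norm_rpow_neg_mul_besselJ_le hν ht)
    _ = 2 / (π * x) := by
        simp only [C]
        field_simp
        rw [sq_sqrt pi_pos.le]

theorem mMul_deriv_bound (d : ℕ) (hd : 4 ≤ d) (x : ℝ) (hx : 0 < x) :
    DifferentiableAt ℝ (mMul d) x ∧ ‖(x : ℂ) * deriv (mMul d) x‖ ≤ 10 ^ 4 := by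
  obtain ⟨c, hc, hcx⟩ := exists_hasDerivAt_mMul_norm_le (by omega : 3 ≤ d) hx
  refine ⟨hc.differentiableAt, ?_⟩
  rw [hc.deriv, norm_mul, Complex.norm_real, norm_of_nonneg hx.le]
  calc x * ‖c‖ ≤ x * (2 / (π * x)) := by gcongr
    _ = 2 / π := by field_simp
    _ ≤ 10 ^ 4 := by
        rw [div_le_iff₀ pi_pos]
        nlinarith [pi_gt_three]
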